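/- Let b ∈ (0, +∞] and let (H, φ) solve the EdGB FLRW system on [0, b) with the negative-branch initial data with parameter β. Then H'(t) + (1/2)·H(t)^2 < 0 for all t ∈ [0, b). -/

import Mathlib

/-- The EdGB FLRW system on a set `I ⊆ ℝ`: `H` is continuously differentiable and
`φ` twice continuously differentiable on `I`, and for every `t ∈ I` the Hamiltonian
constraint `3H² − 3e^φ φ' H³ = φ'²/2` and the scalar field equation
`φ'' = −3Hφ' − 3e^φ H²(H² + H')` hold. -/
def EdGB (H φ : ℝ → ℝ) (I : Set ℝ) : Prop :=
  ContDiffOn ℝ 1 H I ∧ ContDiffOn ℝ 2 φ I ∧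
  (∀ t ∈ I, 3 * H t ^ 2 - 3 * Real.exp (φ t) * deriv φ t * H t ^ 3 = (deriv φ t) ^ 2 / 2) ∧
  (∀ t ∈ I, deriv (deriv φ) t =
      -3 * H t * deriv φ t - 3 * Real.exp (φ t) * H t ^ 2 * (H t ^ 2 + deriv H t))

/-- The negative-branch initial data with parameter `β`:
`H(0) = β`, `φ(0) = 0`, `φ'(0) = −3β³ − √(9β⁶ + 6β²)`, with `0 < β < √6/6`. -/
def NegBranchData (H φ : ℝ → ℝ) (β : ℝ) : Prop :=
  0 < β ∧ β < Real.sqrt 6 / 6 ∧ H 0 = β ∧ φ 0 = 0 ∧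
  deriv φ 0 = -3 * β ^ 3 - Real.sqrt (9 * β ^ 6 + 6 * β ^ 2)

/-!
Write `ψ = φ'` and `x = e^φ H²`. Differentiating the Hamiltonian constraint and eliminating `φ''`
with the scalar field equation expresses `H'` algebraically through `H`, `ψ` and `x`; while
`H > 0`, `ψ < 0` and `x < 1/6` this gives `-5 H² ≤ H' ≤ -(3/2) H²`. These conditions hold near
`t = 0` (where `x = β² < 1/6`) and cannot fail first at a time `T`: on `[0, T)` the upper bound
makes `x` decrease, the lower bound keeps `1/H ≤ 1/β + 5t`, and `ψ` cannot reach `0` while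
`H > 0` because of the constraint. Hence `H' ≤ -(3/2) H² < -(1/2) H²` for `t > 0`. At `t = 0`
the one-sided derivative obeys the same bound, and the two-sided `deriv H 0` must agree with it:
its junk value `0` is excluded by the scalar field equation at `0`.
-/

open Real Set Filter Topology

theorem Ioc_subset_of_continuous_induction {P : ℝ → Prop} {a b : ℝ}
    (hclosed : ∀ T ∈ Ioc a b, (∀ s ∈ Ioo a T, P s) → P T)
    (hopen : ∀ T ∈ Ico a b, (∀ s ∈ Ioc a T, P s) → ∀ᶠ s in 𝓝[>] T, P s) :
    Ioc a b ⊆ {t | P t} := by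
  set S := {t | ∀ s ∈ Ioo a t, P s}
  have hS : S = ⋂ u ∈ {u | a < u ∧ ¬P u}, Iic u := by
    ext t
    simp only [S, mem_ofPred_eq, mem_Ioo, mem_iInter, mem_Iic, and_imp]
    exact forall_congr' fun u => ⟨fun h hu hPu => not_lt.1 fun hut => hPu (h hu hut),
      fun h hu hut => by_contra fun hPu => (h hu hPu).not_gt hut⟩
  have hSclosed : IsClosed S := hS ▸ isClosed_biInter fun _ _ => isClosed_Iic
  have hIcc : Icc a b ⊆ S := by
    refine (hSclosed.inter isClosed_Icc).Icc_subset_of_forall_mem_nhdsWithin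
      (fun s hs => (hs.1.not_gt hs.2).elim) fun x ⟨hxS, hx⟩ => ?_
    have hPx : ∀ s ∈ Ioc a x, P s := fun s hs =>
      hs.2.lt_or_eq.elim (fun hsx => hxS s ⟨hs.1, hsx⟩)
        fun hsx => hsx ▸ hclosed x ⟨hs.1.trans_le hsx.le, hx.2.le⟩ hxS
    obtain ⟨m, hxm, hm⟩ := mem_nhdsGT_iff_exists_Ioo_subset.1 (hopen x hx hPx)
    refine mem_nhdsGT_iff_exists_Ioo_subset.2 ⟨m, hxm, fun t ht s hs => ?_⟩
    rcases le_or_gt s x with hsx | hxs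
    · exact hPx s ⟨hs.1, hsx⟩
    · exact hm ⟨hxs, hs.2.trans ht.2⟩
  exact fun t ht => hclosed t ht (hIcc ⟨ht.1.le, ht.2⟩)

theorem deriv_eq_derivWithin_or_eq_zero {𝕜 F : Type*} [NontriviallyNormedField 𝕜]
    [NormedAddCommGroup F] [NormedSpace 𝕜 F] {f : 𝕜 → F} {s : Set 𝕜} {x : 𝕜}
    (hs : UniqueDiffWithinAt 𝕜 s x) : deriv f x = derivWithin f s x ∨ deriv f x = 0 := by
  by_cases hf : DifferentiableAt 𝕜 f x
  · exact .inl (hf.derivWithin hs).symm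
  · exact .inr (deriv_zero_of_not_differentiableAt hf)

theorem ContinuousWithinAt.tendsto_nhdsGT_of_Ico {X : Type*} [TopologicalSpace X] {f : ℝ → X}
    {a c : ℝ} (hac : a < c) (hf : ContinuousWithinAt f (Ico a c) a) :
    Tendsto f (𝓝[>] a) (𝓝 (f a)) :=
  (hf.mono_of_mem_nhdsWithin (Ico_mem_nhdsGT hac)).tendsto

theorem ContDiffOn.tendsto_deriv_nhdsGT {F : Type*} [NormedAddCommGroup F] [NormedSpace ℝ F]
    {f : ℝ → F} {a c : ℝ} (hac : a < c) (hf : ContDiffOn ℝ 1 f (Ico a c)) :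
    Tendsto (deriv f) (𝓝[>] a) (𝓝 (derivWithin f (Ico a c) a)) := by
  refine (((hf.continuousOn_derivWithin (uniqueDiffOn_Ico a c) le_rfl) a
    ⟨le_rfl, hac⟩).tendsto_nhdsGT_of_Ico hac).congr' ?_
  filter_upwards [Ioo_mem_nhdsGT hac] with t ht
  exact derivWithin_of_mem_nhds (Ico_mem_nhds ht.1 ht.2)

theorem ContDiffOn.deriv_Ico {F : Type*} [NormedAddCommGroup F] [NormedSpace ℝ F]
    {f : ℝ → F} {a c : ℝ} {m n : WithTop ℕ∞} (hf : ContDiffOn ℝ n f (Ico a c)) (hmn : m + 1 ≤ n)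
    (ha : DifferentiableAt ℝ f a) : ContDiffOn ℝ m (deriv f) (Ico a c) := by
  refine (hf.derivWithin (uniqueDiffOn_Ico a c) hmn).congr fun t ht => ?_
  rcases ht.1.lt_or_eq with hat | rfl
  · exact (derivWithin_of_mem_nhds (Ico_mem_nhds hat ht.2)).symm
  · exact (ha.derivWithin (uniqueDiffOn_Ico _ c _ ht)).symm

theorem ContinuousAt.le_of_forall_Ioo {f g : ℝ → ℝ} {a T : ℝ} (haT : a < T)
    (hf : ContinuousAt f T) (hg : ContinuousAt g T) (h : ∀ s ∈ Ioo a T, f s ≤ g s) :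
    f T ≤ g T :=
  ContinuousWithinAt.closure_le (by rw [closure_Ioo haT.ne]; exact ⟨haT.le, le_rfl⟩)
    hf.continuousWithinAt hg.continuousWithinAt h

theorem riccati_bounds_normalized {x g a a' : ℝ} (hx : 0 < x) (hx6 : x < 1 / 6) (hg : 0 < g)
    (hgg : g ^ 2 = 6 * x * g + 6)
    (hrel : 3 * (2 + 3 * x ^ 2 + 2 * x * g) * a' +
      a ^ 2 * (3 * g ^ 2 - 12 * x * g - 3 * x * g ^ 2 + 9 * x ^ 2) = 0) :
    a' ≤ -(3 / 2) * a ^ 2 ∧ -5 * a ^ 2 ≤ a' := by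
  have hg3 : g ≤ 3 := by nlinarith
  have hxg : x * g ≤ 1 / 2 := by nlinarith
  have hx2g : x ^ 2 * g ≤ 1 / 12 := by nlinarith
  have hD : 0 < 2 + 3 * x ^ 2 + 2 * x * g := by positivity
  constructor
  · have h : 9 * (2 + 3 * x ^ 2 + 2 * x * g) ≤
        2 * (3 * g ^ 2 - 12 * x * g - 3 * x * g ^ 2 + 9 * x ^ 2) := by
      nlinarith [sq_nonneg x]
    nlinarith [mul_le_mul_of_nonneg_left h (sq_nonneg a)]
  · have h : 3 * g ^ 2 - 12 * x * g - 3 * x * g ^ 2 + 9 * x ^ 2 ≤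
        15 * (2 + 3 * x ^ 2 + 2 * x * g) := by
      nlinarith [sq_nonneg x, mul_pos hx hg]
    nlinarith [mul_le_mul_of_nonneg_left h (sq_nonneg a)]

theorem riccati_bounds {E a a' ψ : ℝ} (hE : 0 < E) (ha : 0 < a) (hψ : ψ < 0)
    (hx : E * a ^ 2 < 1 / 6) (hcon : ψ ^ 2 + 6 * (E * a ^ 3) * ψ - 6 * a ^ 2 = 0)
    (hrel : (6 * a + 9 * E ^ 2 * a ^ 5 - 6 * E * ψ * a ^ 2) * a' +
      (3 * a * ψ ^ 2 + 12 * E * a ^ 4 * ψ - 3 * E * a ^ 3 * ψ ^ 2 + 9 * E ^ 2 * a ^ 7) = 0) :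
    a' ≤ -(3 / 2) * a ^ 2 ∧ -5 * a ^ 2 ≤ a' := by
  -- with `x = E a²` and `g = -ψ / a` the constraint becomes `g² = 6 x g + 6`
  obtain ⟨g, hg, rfl⟩ : ∃ g, 0 < g ∧ ψ = -(a * g) :=
    ⟨-ψ / a, div_pos (neg_pos.2 hψ) ha, by field_simp⟩
  refine riccati_bounds_normalized (by positivity) hx hg ?_ ?_
  · refine mul_left_cancel₀ (pow_ne_zero 2 ha.ne') ?_
    linear_combination hcon
  · refine mul_left_cancel₀ ha.ne' ?_
    linear_combination hrel

namespace NegBranchData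

variable {H φ : ℝ → ℝ} {β : ℝ}

theorem deriv_phi_zero_lt (hdata : NegBranchData H φ β) : deriv φ 0 < -3 * β ^ 3 := by
  obtain ⟨hβ, -, -, -, hψ⟩ := hdata
  rw [hψ]
  have : 0 < √(9 * β ^ 6 + 6 * β ^ 2) := Real.sqrt_pos.2 (by positivity)
  linarith

theorem sq_lt (hdata : NegBranchData H φ β) : β ^ 2 < 1 / 6 := by
  obtain ⟨hβ, hβ6, -⟩ := hdata
  calc β ^ 2 < (√6 / 6) ^ 2 := pow_lt_pow_left₀ hβ6 hβ.le two_ne_zero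
    _ = 1 / 6 := by rw [div_pow, Real.sq_sqrt (by norm_num)]; norm_num

theorem differentiableAt_phi_zero (hdata : NegBranchData H φ β) : DifferentiableAt ℝ φ 0 := by
  by_contra h
  have := hdata.deriv_phi_zero_lt
  rw [deriv_zero_of_not_differentiableAt h] at this
  nlinarith [pow_pos hdata.1 3]

end NegBranchData

namespace EdGB

variable {H φ : ℝ → ℝ} {I J : Set ℝ} {t : ℝ}

theorem mono (hsys : EdGB H φ I) (hJ : J ⊆ I) : EdGB H φ J :=
  ⟨hsys.1.mono hJ, hsys.2.1.mono hJ, fun t ht => hsys.2.2.1 t (hJ ht),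
    fun t ht => hsys.2.2.2 t (hJ ht)⟩

theorem constraint_quadratic (hsys : EdGB H φ I) (ht : t ∈ I) :
    deriv φ t ^ 2 + 6 * (exp (φ t) * H t ^ 3) * deriv φ t - 6 * H t ^ 2 = 0 := by
  linear_combination -2 * hsys.2.2.1 t ht

theorem hasDerivAt_H (hsys : EdGB H φ I) (ht : I ∈ 𝓝 t) : HasDerivAt H (deriv H t) t :=
  ((hsys.1.contDiffAt ht).differentiableAt one_ne_zero).hasDerivAt

theorem hasDerivAt_phi (hsys : EdGB H φ I) (ht : I ∈ 𝓝 t) : HasDerivAt φ (deriv φ t) t :=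
  ((hsys.2.1.contDiffAt ht).differentiableAt two_ne_zero).hasDerivAt

theorem hasDerivAt_deriv_phi (hsys : EdGB H φ I) (ht : I ∈ 𝓝 t) :
    HasDerivAt (deriv φ) (deriv (deriv φ) t) t :=
  (((hsys.2.1.contDiffAt ht).derivWithin (m := 1) le_rfl).differentiableAt
    one_ne_zero).hasDerivAt

theorem deriv_relation (hsys : EdGB H φ I) (ht : I ∈ 𝓝 t) :
    (6 * H t + 9 * exp (φ t) ^ 2 * H t ^ 5 - 6 * exp (φ t) * deriv φ t * H t ^ 2) * deriv H t +
      (3 * H t * deriv φ t ^ 2 + 12 * exp (φ t) * H t ^ 4 * deriv φ t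
        - 3 * exp (φ t) * H t ^ 3 * deriv φ t ^ 2 + 9 * exp (φ t) ^ 2 * H t ^ 7) = 0 := by
  have hH := hsys.hasDerivAt_H ht
  have hψ := hsys.hasDerivAt_deriv_phi ht
  have hC := ((((hH.pow 2).const_mul 3).sub
    ((((hsys.hasDerivAt_phi ht).exp.const_mul 3).mul hψ).mul (hH.pow 3))).sub
    ((hψ.pow 2).div_const 2))
  have hC0 : HasDerivAt (fun s => 3 * H s ^ 2 - 3 * exp (φ s) * deriv φ s * H s ^ 3
      - deriv φ s ^ 2 / 2) 0 t := by
    refine (hasDerivAt_const t (0 : ℝ)).congr_of_eventuallyEq ?_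
    filter_upwards [ht] with s hs
    rw [hsys.2.2.1 s hs, sub_self]
  have h := hC0.unique hC
  simp only [Pi.mul_apply, Pi.pow_apply] at h
  linear_combination -h + (3 * exp (φ t) * H t ^ 3 + deriv φ t) * hsys.2.2.2 t (mem_of_mem_nhds ht)

def Regime (H φ : ℝ → ℝ) (t : ℝ) : Prop :=
  0 < H t ∧ deriv φ t < 0 ∧ exp (φ t) * H t ^ 2 < 1 / 6

theorem deriv_bounds (hsys : EdGB H φ I) (ht : I ∈ 𝓝 t) (hreg : Regime H φ t) :
    deriv H t ≤ -(3 / 2) * H t ^ 2 ∧ -5 * H t ^ 2 ≤ deriv H t :=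
  riccati_bounds (exp_pos _) hreg.1 hreg.2.1 hreg.2.2
    (hsys.constraint_quadratic (mem_of_mem_nhds ht)) (hsys.deriv_relation ht)

theorem eventually_regime (hsys : EdGB H φ I) (ht : I ∈ 𝓝 t) (hreg : Regime H φ t) :
    ∀ᶠ s in 𝓝 t, Regime H φ s := by
  have hH := (hsys.hasDerivAt_H ht).continuousAt
  have hφ := (hsys.hasDerivAt_phi ht).continuousAt
  have hψ := (hsys.hasDerivAt_deriv_phi ht).continuousAt
  filter_upwards [hH.eventually (eventually_gt_nhds hreg.1),
    hψ.eventually (eventually_lt_nhds hreg.2.1),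
    (hφ.rexp.mul (hH.pow 2)).eventually (eventually_lt_nhds hreg.2.2)] with s h1 h2 h3
  exact ⟨h1, h2, h3⟩

variable {β c T : ℝ}

theorem contDiffOn_deriv_phi (hsys : EdGB H φ (Ico 0 c)) (hdata : NegBranchData H φ β) :
    ContDiffOn ℝ 1 (deriv φ) (Ico 0 c) :=
  hsys.2.1.deriv_Ico le_rfl hdata.differentiableAt_phi_zero

theorem tendsto_H_nhdsGT_zero (hsys : EdGB H φ (Ico 0 c)) (hc : 0 < c)
    (hdata : NegBranchData H φ β) : Tendsto H (𝓝[>] 0) (𝓝 β) :=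
  hdata.2.2.1 ▸ (hsys.1.continuousOn 0 ⟨le_rfl, hc⟩).tendsto_nhdsGT_of_Ico hc

theorem tendsto_deriv_phi_nhdsGT_zero (hsys : EdGB H φ (Ico 0 c)) (hc : 0 < c)
    (hdata : NegBranchData H φ β) : Tendsto (deriv φ) (𝓝[>] 0) (𝓝 (deriv φ 0)) :=
  ((hsys.contDiffOn_deriv_phi hdata).continuousOn 0 ⟨le_rfl, hc⟩).tendsto_nhdsGT_of_Ico hc

theorem eventually_regime_nhdsGT_zero (hsys : EdGB H φ (Ico 0 c)) (hc : 0 < c)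
    (hdata : NegBranchData H φ β) : ∀ᶠ t in 𝓝[>] 0, Regime H φ t := by
  have hH := hsys.tendsto_H_nhdsGT_zero hc hdata
  have hx : Tendsto (fun t => exp (φ t) * H t ^ 2) (𝓝[>] 0) (𝓝 (β ^ 2)) := by
    have h := ((hsys.2.1.continuousOn 0 ⟨le_rfl, hc⟩).rexp.tendsto_nhdsGT_of_Ico hc).mul
      (hH.pow 2)
    rwa [hdata.2.2.2.1, exp_zero, one_mul] at h
  filter_upwards [hH.eventually_const_lt hdata.1,
    (hsys.tendsto_deriv_phi_nhdsGT_zero hc hdata).eventually_lt_const (u := 0)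
      (hdata.deriv_phi_zero_lt.trans (by nlinarith [pow_pos hdata.1 3])),
    hx.eventually_lt_const hdata.sq_lt] with t h1 h2 h3
  exact ⟨h1, h2, h3⟩

theorem exp_mul_sq_le_of_forall_Ioo (hsys : EdGB H φ (Ico 0 c)) (hdata : NegBranchData H φ β)
    (hT : T ∈ Ioo 0 c) (hreg : ∀ s ∈ Ioo 0 T, Regime H φ s) :
    exp (φ T) * H T ^ 2 ≤ β ^ 2 := by
  have hsub : Icc 0 T ⊆ Ico 0 c := Icc_subset_Ico_right hT.2
  have hanti : AntitoneOn (fun s => exp (φ s) * H s ^ 2) (Icc 0 T) := by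
    refine antitoneOn_of_hasDerivWithinAt_nonpos (convex_Icc 0 T)
      ((hsys.2.1.continuousOn.mono hsub).rexp.mul ((hsys.1.continuousOn.mono hsub).pow 2))
      (f' := fun s => exp (φ s) * H s * (deriv φ s * H s + 2 * deriv H s))
      (fun s hs => ?_) fun s hs => ?_ <;> rw [interior_Icc] at hs
    · have hs' : Ico 0 c ∈ 𝓝 s := Ico_mem_nhds hs.1 (hs.2.trans hT.2)
      exact (((hsys.hasDerivAt_phi hs').exp.mul ((hsys.hasDerivAt_H hs').pow 2)).congr_deriv
        (by simp only [Pi.pow_apply]; ring)).hasDerivWithinAt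
    · obtain ⟨hH, hψ, -⟩ := hreg s hs
      have hH' := (hsys.deriv_bounds (Ico_mem_nhds hs.1 (hs.2.trans hT.2)) (hreg s hs)).1
      have : deriv φ s * H s + 2 * deriv H s < 0 := by nlinarith
      exact mul_nonpos_of_nonneg_of_nonpos (by positivity) this.le
  simpa [hdata.2.2.1, hdata.2.2.2.1] using hanti ⟨le_rfl, hT.1.le⟩ ⟨hT.1.le, le_rfl⟩ hT.1.le

theorem H_pos_of_forall_Ioo (hsys : EdGB H φ (Ico 0 c)) (hdata : NegBranchData H φ β)
    (hT : T ∈ Ioo 0 c) (hreg : ∀ s ∈ Ioo 0 T, Regime H φ s) : 0 < H T := by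
  have hpos : ∀ s ∈ Ico 0 T, 0 < H s := fun s hs =>
    hs.1.lt_or_eq.elim (fun h => (hreg s ⟨h, hs.2⟩).1) fun h => h ▸ hdata.2.2.1 ▸ hdata.1
  have hsub : Ico 0 T ⊆ Ico 0 c := Ico_subset_Ico_right hT.2.le
  have hanti : AntitoneOn (fun s => (H s)⁻¹ - 5 * s) (Ico 0 T) := by
    refine antitoneOn_of_hasDerivWithinAt_nonpos (convex_Ico 0 T)
      (((hsys.1.continuousOn.mono hsub).inv₀ fun s hs => (hpos s hs).ne').sub
        (continuousOn_const.mul continuousOn_id))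
      (f' := fun s => -deriv H s / H s ^ 2 - 5) (fun s hs => ?_) fun s hs => ?_ <;>
      rw [interior_Ico] at hs
    · have hs' : Ico 0 c ∈ 𝓝 s := Ico_mem_nhds hs.1 (hs.2.trans hT.2)
      exact (((hsys.hasDerivAt_H hs').inv (hpos s (Ioo_subset_Ico_self hs)).ne').sub
        ((hasDerivAt_id s).const_mul 5 |>.congr_deriv (mul_one 5))).hasDerivWithinAt
    · have hH' := (hsys.deriv_bounds (Ico_mem_nhds hs.1 (hs.2.trans hT.2)) (hreg s hs)).2
      rw [sub_nonpos, div_le_iff₀ (pow_pos (hreg s hs).1 2)]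
      linarith
  have hlow : ∀ s ∈ Ioo 0 T, (β⁻¹ + 5 * T)⁻¹ ≤ H s := by
    intro s hs
    have h := hanti ⟨le_rfl, hT.1⟩ (Ioo_subset_Ico_self hs) hs.1.le
    simp only [hdata.2.2.1, mul_zero, sub_zero] at h
    exact inv_le_of_inv_le₀ (hreg s hs).1 (by linarith [hs.2])
  have hβ := hdata.1
  have hT0 := hT.1
  exact (by positivity : (0 : ℝ) < (β⁻¹ + 5 * T)⁻¹).trans_le
    (ContinuousAt.le_of_forall_Ioo hT.1 continuousAt_const
      (hsys.hasDerivAt_H (Ico_mem_nhds hT.1 hT.2)).continuousAt hlow)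

theorem regime_of_forall_Ioo (hsys : EdGB H φ (Ico 0 c)) (hdata : NegBranchData H φ β)
    (hT : T ∈ Ioo 0 c) (hreg : ∀ s ∈ Ioo 0 T, Regime H φ s) : Regime H φ T := by
  have hHT := hsys.H_pos_of_forall_Ioo hdata hT hreg
  refine ⟨hHT, ?_, (hsys.exp_mul_sq_le_of_forall_Ioo hdata hT hreg).trans_lt hdata.sq_lt⟩
  have hle : deriv φ T ≤ 0 :=
    ContinuousAt.le_of_forall_Ioo hT.1
      (hsys.hasDerivAt_deriv_phi (Ico_mem_nhds hT.1 hT.2)).continuousAt continuousAt_const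
      fun s hs => (hreg s hs).2.1.le
  refine hle.lt_of_ne fun h0 => ?_
  have h := hsys.constraint_quadratic ⟨hT.1.le, hT.2⟩
  rw [h0] at h
  nlinarith

theorem regime_of_mem_Ioo (hsys : EdGB H φ (Ico 0 c)) (hdata : NegBranchData H φ β)
    (ht : t ∈ Ioo 0 c) : Regime H φ t := by
  refine Ioc_subset_of_continuous_induction (b := t)
    (fun T hT => hsys.regime_of_forall_Ioo hdata ⟨hT.1, hT.2.trans_lt ht.2⟩)
    (fun T hT hreg => ?_) ⟨ht.1, le_rfl⟩
  rcases hT.1.lt_or_eq with hT0 | rfl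
  · exact nhdsWithin_le_nhds <| hsys.eventually_regime
      (Ico_mem_nhds hT0 (hT.2.trans ht.2)) (hreg T ⟨hT0, le_rfl⟩)
  · exact hsys.eventually_regime_nhdsGT_zero (ht.1.trans ht.2) hdata

theorem derivWithin_H_zero_le (hsys : EdGB H φ (Ico 0 c)) (hc : 0 < c)
    (hdata : NegBranchData H φ β) : derivWithin H (Ico 0 c) 0 ≤ -(3 / 2) * β ^ 2 := by
  have hlim := (hsys.1.tendsto_deriv_nhdsGT hc).add
    (((hsys.tendsto_H_nhdsGT_zero hc hdata).pow 2).const_mul (3 / 2))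
  have h : derivWithin H (Ico 0 c) 0 + 3 / 2 * β ^ 2 ≤ 0 := by
    refine le_of_tendsto hlim ?_
    filter_upwards [Ioo_mem_nhdsGT hc] with s hs
    have := (hsys.deriv_bounds (Ico_mem_nhds hs.1 hs.2) (hsys.regime_of_mem_Ioo hdata hs)).1
    linarith
  linarith

theorem derivWithin_deriv_phi_zero (hsys : EdGB H φ (Ico 0 c)) (hc : 0 < c)
    (hdata : NegBranchData H φ β) :
    derivWithin (deriv φ) (Ico 0 c) 0 =
      -3 * β * deriv φ 0 - 3 * β ^ 2 * (β ^ 2 + derivWithin H (Ico 0 c) 0) := by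
  have hH := hsys.tendsto_H_nhdsGT_zero hc hdata
  have hexp : Tendsto (fun t => exp (φ t)) (𝓝[>] 0) (𝓝 1) := by
    have h := (hsys.2.1.continuousOn 0 ⟨le_rfl, hc⟩).rexp.tendsto_nhdsGT_of_Ico hc
    rwa [hdata.2.2.2.1, exp_zero] at h
  refine tendsto_nhds_unique ((hsys.contDiffOn_deriv_phi hdata).tendsto_deriv_nhdsGT hc) ?_
  have hrhs := ((tendsto_const_nhds (x := (-3 : ℝ))).mul hH).mul
    (hsys.tendsto_deriv_phi_nhdsGT_zero hc hdata) |>.sub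
    (((tendsto_const_nhds (x := (3 : ℝ))).mul hexp).mul (hH.pow 2) |>.mul
      ((hH.pow 2).add (hsys.1.tendsto_deriv_nhdsGT hc)))
  rw [mul_one] at hrhs
  refine hrhs.congr' ?_
  filter_upwards [Ioo_mem_nhdsGT hc] with s hs
  exact (hsys.2.2.2 s (Ioo_subset_Ico_self hs)).symm

theorem deriv_add_half_sq_neg (hsys : EdGB H φ (Ico 0 c)) (hdata : NegBranchData H φ β)
    (ht : t ∈ Ico 0 c) : deriv H t + 1 / 2 * H t ^ 2 < 0 := by
  rcases ht.1.lt_or_eq with ht0 | rfl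
  · have hreg := hsys.regime_of_mem_Ioo hdata ⟨ht0, ht.2⟩
    have := (hsys.deriv_bounds (Ico_mem_nhds ht0 ht.2) hreg).1
    nlinarith [pow_pos hreg.1 2]
  obtain ⟨hβ, -, hH0, hφ0, -⟩ := id hdata
  have hL := hsys.derivWithin_H_zero_le ht.2 hdata
  have hM := hsys.derivWithin_deriv_phi_zero ht.2 hdata
  have hψ0 := hdata.deriv_phi_zero_lt
  have hS := hsys.2.2.2 0 ht
  rw [hφ0, exp_zero, hH0] at hS
  have hU := uniqueDiffOn_Ico 0 c 0 ht
  rcases deriv_eq_derivWithin_or_eq_zero (f := H) hU with hH' | hH'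
  · rw [hH', hH0]
    nlinarith [pow_pos hβ 2]
  -- A junk value `H'(0) = 0` would make `φ''(0) > 0`, so `φ'` is differentiable at `0` and
  -- `φ''(0)` is its one-sided limit, which forces the one-sided derivative of `H` to vanish.
  rw [hH'] at hS
  rcases deriv_eq_derivWithin_or_eq_zero (f := deriv φ) hU with hψ' | hψ'
  · rw [hψ', hM] at hS
    nlinarith [pow_pos hβ 2]
  · rw [hψ'] at hS
    nlinarith [pow_pos hβ 4]

end EdGB

theorem stmt_9 (b : EReal) (β : ℝ) (H φ : ℝ → ℝ)
    (hsys : EdGB H φ {t : ℝ | 0 ≤ t ∧ (t : EReal) < b})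
    (hdata : NegBranchData H φ β) :
    ∀ t : ℝ, 0 ≤ t → (t : EReal) < b →
      deriv H t + (1 / 2) * H t ^ 2 < 0 := by
  intro t ht0 htb
  obtain ⟨c, htc, hcb⟩ := EReal.lt_iff_exists_real_btwn.1 htb
  have hsub : Ico 0 c ⊆ {t : ℝ | 0 ≤ t ∧ (t : EReal) < b} :=
    fun s hs => ⟨hs.1, (EReal.coe_lt_coe_iff.2 hs.2).trans hcb⟩
  exact (hsys.mono hsub).deriv_add_half_sq_neg hdata ⟨ht0, EReal.coe_lt_coe_iff.1 htc⟩
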